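/- Let G be a compact Hausdorff topological group acting continuously on a Hausdorff topological space M, let H be a subgroup of G, and let p ∈ M. Then for every point q in the orbit of p under the topological closure of H, the orbit of q under H is dense in the orbit of p under the closure of H; that is, cl(O_H(q)) = O_{cl(H)}(p) for every q ∈ O_{cl(H)}(p). -/

import Mathlib

/-!
Since `G` is compact and `M` Hausdorff, the orbit map `g ↦ g • q` is closed, so it carries the
closure of `H` onto the closure of its image, the `H`-orbit of `q`. When `q` lies in the
`cl(H)`-orbit of `p`, the two `cl(H)`-orbits coincide.
-/

open MulAction

theorem MulAction.orbit_subgroup_eq_image {G M : Type*} [Group G] [MulAction G M]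
    (K : Subgroup G) (q : M) : orbit K q = (· • q) '' (K : Set G) := by
  ext x
  simp [mem_orbit_iff, Subgroup.smul_def]

theorem closure_orbit_eq_orbit_topologicalClosure {G M : Type*} [Group G] [TopologicalSpace G]
    [IsTopologicalGroup G] [CompactSpace G] [TopologicalSpace M] [T2Space M] [MulAction G M]
    [ContinuousSMul G M] (H : Subgroup G) (q : M) :
    closure (orbit H q) = orbit H.topologicalClosure q := by
  have hcont : Continuous (· • q : G → M) := continuous_id.smul continuous_const
  rw [orbit_subgroup_eq_image, orbit_subgroup_eq_image, H.topologicalClosure_coe,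
    hcont.isClosedMap.closure_image_eq_of_continuous hcont]

theorem stmt_3_general {G : Type*} [Group G] [TopologicalSpace G] [IsTopologicalGroup G]
    [CompactSpace G]
    {M : Type*} [TopologicalSpace M] [T2Space M] [MulAction G M] [ContinuousSMul G M]
    (H : Subgroup G) (p : M) :
    ∀ q ∈ MulAction.orbit H.topologicalClosure p,
      closure (MulAction.orbit H q) = MulAction.orbit H.topologicalClosure p := by
  intro q hq
  rw [closure_orbit_eq_orbit_topologicalClosure, orbit_eq_iff.mpr hq]

/-- For a continuous action of a compact Hausdorff topological group `G` on a
Hausdorff space `M`, a subgroup `H ≤ G` and `p ∈ M`: for every `q` in the orbit of `p` under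
the closure of `H`, the `H`-orbit of `q` is dense in the `cl(H)`-orbit of `p`. -/
theorem stmt_3 {G : Type*} [Group G] [TopologicalSpace G] [IsTopologicalGroup G]
    [CompactSpace G] [T2Space G]
    {M : Type*} [TopologicalSpace M] [T2Space M] [MulAction G M] [ContinuousSMul G M]
    (H : Subgroup G) (p : M) :
    ∀ q ∈ MulAction.orbit H.topologicalClosure p,
      closure (MulAction.orbit H q) = MulAction.orbit H.topologicalClosure p :=
  stmt_3_general H p
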